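/- Möbius-type inversion over shuffles with ones: suppose families f(k,t) and g(k,t) (valued in an abelian group, defined for all indices k of depth ≥ 2 and t ≥ 0, extended linearly in k) satisfy f(k,t) = −∑_{u=0}^{t} g(k_u, t−u) for all k and t, where k_u := (k₁, ((k₂,…,k_{r-1}) ш {1}^u), k_r) and (k_u)_{u'} = C(u+u',u)·k_{u+u'}. Then g(k,t) = −∑_{u=0}^{t} (−1)^u f(k_u, t−u) for all k and t. -/

import Mathlib

/-!
By linearity the hypothesis extends from single indices to `k_u`, and since
`(k_u)_v = C(u+v, u) k_{u+v}` (associativity of the shuffle together with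
`{1}^u ш {1}^v = C(u+v, u) {1}^{u+v}`) it reads `F(k_u, s) = -∑_{v ≤ s} C(u+v, u) G(k_{u+v}, s-v)`.
Substituting this into the claimed right-hand side and collecting the terms with `u + v = m`
leaves `∑_{m ≤ t} (∑_{u ≤ m} (-1)^u C(m, u)) G(k_m, t-m)`, in which only `m = 0` survives.
-/

/-- The naive shuffle of two tuples: formal sum of all interleavings. -/
noncomputable def shuf : List ℕ → List ℕ → (List ℕ →₀ ℤ)
  | [], l => Finsupp.single l 1
  | k, [] => Finsupp.single k 1
  | a :: k, b :: l =>
      (shuf k (b :: l)).mapDomain (a :: ·) + (shuf (a :: k) l).mapDomain (b :: ·)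
termination_by k l => k.length + l.length

/-- k_u := (k₁, ((k₂,…,k_{r-1}) ш {1}^u), k_r), as a formal sum of indices. -/
noncomputable def kU (k : List ℕ) (u : ℕ) : List ℕ →₀ ℤ :=
  (shuf (k.drop 1).dropLast (List.replicate u 1)).mapDomain
    (fun mid => k.headD 1 :: (mid ++ [k.getLastD 1]))

/-- Linear extension of `kU` to formal ℤ-linear combinations of indices. -/
noncomputable def kUExt (x : List ℕ →₀ ℤ) (u : ℕ) : List ℕ →₀ ℤ :=
  x.sum fun k c => c • kU k u

open Finset Finsupp

/-- `x ш c` for a formal sum `x` and a word `c`. -/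
noncomputable def shufRight (x : List ℕ →₀ ℤ) (c : List ℕ) : List ℕ →₀ ℤ :=
  x.sum fun l n => n • shuf l c

/-- `a ш x` for a word `a` and a formal sum `x`. -/
noncomputable def shufLeft (a : List ℕ) (x : List ℕ →₀ ℤ) : List ℕ →₀ ℤ :=
  x.sum fun l n => n • shuf a l

lemma shuf_nil_left (l : List ℕ) : shuf [] l = single l 1 := by
  rw [shuf]

lemma shuf_nil_right (k : List ℕ) : shuf k [] = single k 1 := by
  cases k <;> simp [shuf]

lemma shuf_cons_cons (a b : ℕ) (k l : List ℕ) :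
    shuf (a :: k) (b :: l)
      = (shuf k (b :: l)).mapDomain (a :: ·) + (shuf (a :: k) l).mapDomain (b :: ·) := by
  rw [shuf]

lemma shufRight_add (x y : List ℕ →₀ ℤ) (c : List ℕ) :
    shufRight (x + y) c = shufRight x c + shufRight y c :=
  sum_add_index' (by simp) fun _ _ _ => add_smul _ _ _

lemma shufLeft_add (a : List ℕ) (x y : List ℕ →₀ ℤ) :
    shufLeft a (x + y) = shufLeft a x + shufLeft a y :=
  sum_add_index' (by simp) fun _ _ _ => add_smul _ _ _

lemma shufRight_mapDomain_cons (x z : ℕ) (c : List ℕ) (w : List ℕ →₀ ℤ) :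
    shufRight (w.mapDomain (x :: ·)) (z :: c)
      = (shufRight w (z :: c)).mapDomain (x :: ·)
        + (shufRight (w.mapDomain (x :: ·)) c).mapDomain (z :: ·) := by
  simp only [shufRight]
  rw [sum_mapDomain_index (by simp) (fun _ _ _ => add_smul _ _ _),
    sum_mapDomain_index (by simp) (fun _ _ _ => add_smul _ _ _),
    mapDomain_sum, mapDomain_sum, ← sum_add]
  refine Finsupp.sum_congr fun l _ => ?_
  rw [shuf_cons_cons, smul_add, mapDomain_smul, mapDomain_smul]

lemma shufLeft_mapDomain_cons (x y : ℕ) (a : List ℕ) (w : List ℕ →₀ ℤ) :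
    shufLeft (x :: a) (w.mapDomain (y :: ·))
      = (shufLeft a (w.mapDomain (y :: ·))).mapDomain (x :: ·)
        + (shufLeft (x :: a) w).mapDomain (y :: ·) := by
  simp only [shufLeft]
  rw [sum_mapDomain_index (by simp) (fun _ _ _ => add_smul _ _ _),
    sum_mapDomain_index (by simp) (fun _ _ _ => add_smul _ _ _),
    mapDomain_sum, mapDomain_sum, ← sum_add]
  refine Finsupp.sum_congr fun l _ => ?_
  rw [shuf_cons_cons, smul_add, mapDomain_smul, mapDomain_smul]

lemma shufRight_single (l c : List ℕ) : shufRight (single l 1) c = shuf l c := by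
  rw [shufRight, sum_single_index (by simp), one_smul]

lemma shufLeft_single (a l : List ℕ) : shufLeft a (single l 1) = shuf a l := by
  rw [shufLeft, sum_single_index (by simp), one_smul]

lemma shuf_assoc : ∀ a b c : List ℕ, shufRight (shuf a b) c = shufLeft a (shuf b c)
  | [], b, c => by
    rw [shuf_nil_left, shufRight_single, shufLeft]
    simp only [shuf_nil_left, smul_single_one, sum_single]
  | x :: a, b, [] => by
    rw [shuf_nil_right b, shufLeft_single, shufRight]
    simp only [shuf_nil_right, smul_single_one, sum_single]
  | x :: a, [], z :: c => by
    rw [shuf_nil_right, shuf_nil_left, shufRight_single, shufLeft_single]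
  | x :: a, y :: b, z :: c => by
    have hx := shuf_assoc a (y :: b) (z :: c)
    have hy := shuf_assoc (x :: a) b (z :: c)
    have hz := shuf_assoc (x :: a) (y :: b) c
    rw [shuf_cons_cons, shufRight_add] at hz
    rw [shuf_cons_cons, shufLeft_add] at hx
    rw [shuf_cons_cons x y, shuf_cons_cons y z, shufRight_add, shufLeft_add,
      shufRight_mapDomain_cons, shufRight_mapDomain_cons, shufLeft_mapDomain_cons,
      shufLeft_mapDomain_cons, hx, hy, ← hz, mapDomain_add, mapDomain_add]
    abel
termination_by a b c => a.length + b.length + c.length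

lemma shuf_replicate_one : ∀ u v : ℕ,
    shuf (List.replicate u 1) (List.replicate v 1)
      = ((u + v).choose u : ℤ) • single (List.replicate (u + v) 1) 1
  | 0, v => by simp [shuf_nil_left]
  | u + 1, 0 => by simp [shuf_nil_right]
  | u + 1, v + 1 => by
    rw [List.replicate_succ, List.replicate_succ, shuf_cons_cons, ← List.replicate_succ,
      ← List.replicate_succ, shuf_replicate_one u (v + 1), shuf_replicate_one (u + 1) v]
    simp only [smul_single_one, mapDomain_single]
    rw [show u + (v + 1) = u + v + 1 by omega, show u + 1 + v = u + v + 1 by omega,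
      show u + 1 + (v + 1) = u + v + 1 + 1 by omega, ← single_add, ← List.replicate_succ,
      Nat.choose_succ_succ' (u + v + 1) u, Nat.cast_add]
termination_by u v => u + v

lemma shufRight_shuf_replicate_one (m : List ℕ) (u v : ℕ) :
    shufRight (shuf m (List.replicate u 1)) (List.replicate v 1)
      = ((u + v).choose u : ℤ) • shuf m (List.replicate (u + v) 1) := by
  rw [shuf_assoc, shuf_replicate_one, smul_single_one, shufLeft, sum_single_index (by simp)]

lemma kU_zero : ∀ {k : List ℕ}, 2 ≤ k.length → kU k 0 = single k 1
  | a :: b :: l, _ => by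
    rw [kU, List.replicate_zero, shuf_nil_right, mapDomain_single]
    simp [List.getLastD_eq_getLast?, List.getLast?_eq_some_getLast, List.dropLast_append_getLast]

lemma kU_cons_append_singleton (a b : ℕ) (mid : List ℕ) (u : ℕ) :
    kU (a :: (mid ++ [b])) u
      = (shuf mid (List.replicate u 1)).mapDomain (fun m => a :: (m ++ [b])) := by
  have hlast : (a :: (mid ++ [b])).getLastD 1 = b := by
    rw [← List.cons_append, List.getLastD_concat]
  rw [kU, hlast]
  simp

lemma two_le_length_of_mem_support_kU {k j : List ℕ} {u : ℕ} (hj : j ∈ (kU k u).support) :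
    2 ≤ j.length := by
  classical
  obtain ⟨mid, -, rfl⟩ := mem_image.mp (mapDomain_support hj)
  simp

lemma kUExt_single (k : List ℕ) (u : ℕ) : kUExt (single k 1) u = kU k u := by
  rw [kUExt, sum_single_index (by simp), one_smul]

lemma kUExt_add (x y : List ℕ →₀ ℤ) (u : ℕ) : kUExt (x + y) u = kUExt x u + kUExt y u :=
  sum_add_index' (by simp) fun _ _ _ => add_smul _ _ _

lemma kUExt_kU (k : List ℕ) (u v : ℕ) :
    kUExt (kU k u) v = ((u + v).choose u : ℤ) • kU k (u + v) := by
  rw [kUExt, kU, sum_mapDomain_index (by simp) (fun _ _ _ => add_smul _ _ _)]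
  simp only [kU_cons_append_singleton, ← mapDomain_smul]
  rw [← mapDomain_sum, ← shufRight, shufRight_shuf_replicate_one, mapDomain_smul, kU]

lemma Finsupp.addMonoidHom_eq_of_forall_mem_support {α M : Type*} [AddCommGroup M]
    (φ ψ : (α →₀ ℤ) →+ M) {x : α →₀ ℤ}
    (h : ∀ j ∈ x.support, φ (single j 1) = ψ (single j 1)) : φ x = ψ x := by
  rw [← x.sum_single, map_finsuppSum, map_finsuppSum]
  refine Finsupp.sum_congr fun j hj => ?_
  rw [← smul_single_one, map_zsmul, map_zsmul, h j hj]

lemma binomial_inversion {M : Type*} [AddCommGroup M] (f g : ℕ → ℕ → M)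
    (h : ∀ u s, f u s = -∑ v ∈ range (s + 1), ((u + v).choose u : ℤ) • g (u + v) (s - v))
    (t : ℕ) : g 0 t = -∑ u ∈ range (t + 1), (-1 : ℤ) ^ u • f u (t - u) := by
  set a : ℕ → ℕ → M := fun u v =>
    ((-1 : ℤ) ^ u * ((u + v).choose u : ℤ)) • g (u + v) (t - (u + v))
  calc g 0 t
      = ∑ m ∈ range (t + 1), (if m = 0 then (1 : ℤ) else 0) • g m (t - m) := by
        simp
    _ = ∑ m ∈ range (t + 1), ∑ u ∈ range (m + 1), a u (m - u) := by
        refine sum_congr rfl fun m _ => ?_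
        rw [← Int.alternating_sum_range_choose, sum_smul]
        refine sum_congr rfl fun u hu => ?_
        have hum : u + (m - u) = m := by have := mem_range.mp hu; omega
        simp only [a, hum]
    _ = ∑ u ∈ range (t + 1), ∑ v ∈ range (t + 1 - u), a u v := sum_range_diag_flip _ _
    _ = -∑ u ∈ range (t + 1), (-1 : ℤ) ^ u • f u (t - u) := by
        rw [← sum_neg_distrib]
        refine sum_congr rfl fun u hu => ?_
        have htu : t + 1 - u = t - u + 1 := by have := mem_range.mp hu; omega
        rw [h, smul_neg, neg_neg, Finset.smul_sum, htu]
        refine sum_congr rfl fun v _ => ?_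
        simp only [a, mul_smul, Nat.sub_sub]

theorem shuffle_ones_inversion_general {M : Type*} [AddCommGroup M]
    (F G : (List ℕ →₀ ℤ) → ℕ → M)
    (hFadd : ∀ x y t, F (x + y) t = F x t + F y t)
    (hGadd : ∀ x y t, G (x + y) t = G x t + G y t)
    (hrec : ∀ k : List ℕ, 2 ≤ k.length → ∀ t : ℕ,
      F (Finsupp.single k 1) t
        = -∑ u ∈ Finset.range (t + 1), G (kUExt (Finsupp.single k 1) u) (t - u)) :
    ∀ k : List ℕ, 2 ≤ k.length → ∀ t : ℕ,
      G (Finsupp.single k 1) t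
        = -∑ u ∈ Finset.range (t + 1),
            (-1 : ℤ) ^ u • F (kUExt (Finsupp.single k 1) u) (t - u) := by
  let Fₗ (s : ℕ) : (List ℕ →₀ ℤ) →+ M := .mk' (F · s) (hFadd · · s)
  let Gₗ (s : ℕ) : (List ℕ →₀ ℤ) →+ M := .mk' (G · s) (hGadd · · s)
  let kUₗ (u : ℕ) : (List ℕ →₀ ℤ) →+ (List ℕ →₀ ℤ) := .mk' (kUExt · u) (kUExt_add · · u)
  have hrec_kU (k : List ℕ) (u s : ℕ) : F (kU k u) s
      = -∑ v ∈ range (s + 1), ((u + v).choose u : ℤ) • G (kU k (u + v)) (s - v) := by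
    have h : Fₗ s (kU k u) = (-∑ v ∈ range (s + 1), (Gₗ (s - v)).comp (kUₗ v)) (kU k u) :=
      addMonoidHom_eq_of_forall_mem_support _ _ fun j hj => by
        simpa [Fₗ, Gₗ, kUₗ] using hrec j (two_le_length_of_mem_support_kU hj) s
    simpa only [Fₗ, Gₗ, kUₗ, AddMonoidHom.mk'_apply, AddMonoidHom.neg_apply,
      AddMonoidHom.finsetSum_apply, AddMonoidHom.comp_apply, kUExt_kU,
      map_zsmul (Gₗ _)] using h
  intro k hk t
  simp only [kUExt_single]
  rw [← kU_zero hk]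
  exact binomial_inversion (fun u s => F (kU k u) s) (fun m s => G (kU k m) s) (hrec_kU k) t

/-- Möbius-type inversion over shuffles with ones: if
F(k,t) = −∑_{u=0}^{t} G(k_u, t−u) for all indices k of depth ≥ 2 and all t,
then G(k,t) = −∑_{u=0}^{t} (−1)^u F(k_u, t−u). -/
theorem shuffle_ones_inversion {M : Type*} [AddCommGroup M]
    (F G : (List ℕ →₀ ℤ) → ℕ → M)
    (hFadd : ∀ x y t, F (x + y) t = F x t + F y t)
    (hFsmul : ∀ (c : ℤ) x t, F (c • x) t = c • F x t)
    (hGadd : ∀ x y t, G (x + y) t = G x t + G y t)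
    (hGsmul : ∀ (c : ℤ) x t, G (c • x) t = c • G x t)
    (hrec : ∀ k : List ℕ, 2 ≤ k.length → ∀ t : ℕ,
      F (Finsupp.single k 1) t
        = -∑ u ∈ Finset.range (t + 1), G (kUExt (Finsupp.single k 1) u) (t - u)) :
    ∀ k : List ℕ, 2 ≤ k.length → ∀ t : ℕ,
      G (Finsupp.single k 1) t
        = -∑ u ∈ Finset.range (t + 1),
            (-1 : ℤ) ^ u • F (kUExt (Finsupp.single k 1) u) (t - u) :=
  shuffle_ones_inversion_general F G hFadd hGadd hrec
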